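/- arXiv:2602.17488 — 2 statements merged into one kernel-verified Lean document; each statement's English description precedes it below -/
import Mathlib

section
/- Let d, n, m be positive integers, κ > 0, and ξ ≥ 0. Let D' = (x'₁, …, x'ₙ) be a tuple with each x'_t ∈ {−κ, κ}^d, and let D̃' = (x̃'₁, …, x̃'ₘ) be any tuple of points of ℝ^d. For i ∈ [d] let C^i = {+dκ·𝟏_i, −dκ·𝟏_i}. If |cost_{C^i,2}(D̃') − cost_{C^i,2}(D')| ≤ ξ for every i ∈ [d], then (1/m) ∑_{t=1}^m ‖x̃'_t − κ·sgn(x̃'_t)‖₂² ≤ ξ. -/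
/-!
Summing the cost of the `d` two-point centre sets `C^i = {± dκ 𝟏_i}` over `i` gives, for every
point `y`, the exact identity `∑ᵢ cost_{C^i}(y) = d ‖y - κ sgn y‖² + (d³ - d²) κ²`. The second term
does not depend on `y`, and the first vanishes on `{±κ}^d`. Hence summing the `d` accuracy
hypotheses makes the constants cancel and leaves `d · (1/m) ∑ₜ ‖x̃'ₜ - κ sgn x̃'ₜ‖² ≤ d ξ`.
-/

open scoped BigOperators

/-- `sgn v = 1` if `v ≥ 0` and `-1` if `v < 0`. -/
noncomputable def sgn (v : ℝ) : ℝ := if 0 ≤ v then 1 else -1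

/-- Coordinatewise sign of a vector in Euclidean space. -/
noncomputable def sgnVecE {d : ℕ} (y : EuclideanSpace ℝ (Fin d)) : EuclideanSpace ℝ (Fin d) :=
  WithLp.toLp 2 (fun i => sgn (y i))

/-- The `k`-means cost query in the Euclidean metric: `cost_{C,2}(x) = min_{c ∈ C} ‖x - c‖₂²`. -/
noncomputable def costE {d k : ℕ} (C : Fin k → EuclideanSpace ℝ (Fin d))
    (x : EuclideanSpace ℝ (Fin d)) : ℝ :=
  ⨅ j : Fin k, ‖x - C j‖ ^ 2

/-- The Euclidean cost of a dataset: `cost_{C,2}(D) = (1/n) ∑_t cost_{C,2}(x_t)`. -/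
noncomputable def costEData {d k n : ℕ} (C : Fin k → EuclideanSpace ℝ (Fin d))
    (D : Fin n → EuclideanSpace ℝ (Fin d)) : ℝ :=
  (∑ t, costE C (D t)) / n

open Finset

lemma sgn_of_nonneg {v : ℝ} (hv : 0 ≤ v) : sgn v = 1 := if_pos hv

lemma sgn_of_neg {v : ℝ} (hv : v < 0) : sgn v = -1 := if_neg hv.not_ge

lemma sgn_sq (v : ℝ) : sgn v ^ 2 = 1 := by
  unfold sgn; split <;> norm_num

lemma mul_sgn_self (v : ℝ) : v * sgn v = |v| := by
  rcases le_or_gt 0 v with hv | hv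
  · rw [sgn_of_nonneg hv, abs_of_nonneg hv, mul_one]
  · rw [sgn_of_neg hv, abs_of_neg hv, mul_neg_one]

lemma smul_sgnVecE_eq_self {d : ℕ} {κ : ℝ} (hκ : 0 < κ) {x : EuclideanSpace ℝ (Fin d)}
    (hx : ∀ l, x l = κ ∨ x l = -κ) : κ • sgnVecE x = x := by
  ext l
  rcases hx l with h | h <;> simp only [PiLp.smul_apply, sgnVecE, smul_eq_mul, h]
  · rw [sgn_of_nonneg hκ.le, mul_one]
  · rw [sgn_of_neg (neg_neg_iff_pos.2 hκ), mul_neg_one]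

lemma norm_sub_smul_sgnVecE_sq {d : ℕ} (κ : ℝ) (y : EuclideanSpace ℝ (Fin d)) :
    ‖y - κ • sgnVecE y‖ ^ 2 = ‖y‖ ^ 2 - 2 * κ * ∑ l, |y l| + d * κ ^ 2 := by
  have hcoord : ∀ l, (y l - κ * sgn (y l)) ^ 2 = y l ^ 2 - 2 * κ * |y l| + κ ^ 2 := fun l => by
    linear_combination (-2 * κ) * mul_sgn_self (y l) + κ ^ 2 * sgn_sq (y l)
  simp only [EuclideanSpace.real_norm_sq_eq, PiLp.sub_apply, PiLp.smul_apply, sgnVecE,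
    smul_eq_mul, hcoord, sum_add_distrib, sum_sub_distrib, mul_sum, sum_const, card_univ,
    Fintype.card_fin, nsmul_eq_mul]

lemma costE_pair {d : ℕ} (a b x : EuclideanSpace ℝ (Fin d)) :
    costE ![a, b] x = min (‖x - a‖ ^ 2) (‖x - b‖ ^ 2) := by
  have hbdd : BddBelow (Set.range fun j => ‖x - ![a, b] j‖ ^ 2) :=
    ⟨0, Set.forall_mem_range.2 fun _ => by positivity⟩
  exact le_antisymm (le_min (ciInf_le hbdd 0) (ciInf_le hbdd 1))
    (le_ciInf (Fin.forall_fin_two.2 ⟨min_le_left _ _, min_le_right _ _⟩))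

noncomputable def axisPair {d : ℕ} (c : ℝ) (i : Fin d) : Fin 2 → EuclideanSpace ℝ (Fin d) :=
  ![c • EuclideanSpace.single i 1, (-c) • EuclideanSpace.single i 1]

lemma costE_axisPair {d : ℕ} {c : ℝ} (hc : 0 ≤ c) (i : Fin d) (y : EuclideanSpace ℝ (Fin d)) :
    costE (axisPair c i) y = ‖y‖ ^ 2 + c ^ 2 - 2 * c * |y i| := by
  have hdist : ∀ s : ℝ,
      ‖y - s • EuclideanSpace.single i 1‖ ^ 2 = ‖y‖ ^ 2 + s ^ 2 - 2 * (s * y i) := by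
    intro s
    rw [norm_sub_sq_real, inner_smul_right, EuclideanSpace.inner_single_right, norm_smul,
      PiLp.norm_single]
    simp only [Real.ringHom_apply, one_mul, Real.norm_eq_abs, norm_one, mul_one, sq_abs]
    ring
  rw [axisPair, costE_pair, hdist, hdist, neg_sq, neg_mul, mul_neg, min_sub_sub_left,
    ← abs_eq_max_neg, abs_mul, abs_two, abs_mul, abs_of_nonneg hc, mul_assoc]

lemma sum_costE_axisPair {d : ℕ} {κ : ℝ} (hκ : 0 ≤ κ) (y : EuclideanSpace ℝ (Fin d)) :
    ∑ i, costE (axisPair (d * κ) i) y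
      = d * ‖y - κ • sgnVecE y‖ ^ 2 + ((d : ℝ) ^ 3 - (d : ℝ) ^ 2) * κ ^ 2 := by
  simp only [costE_axisPair (by positivity : (0 : ℝ) ≤ d * κ), norm_sub_smul_sgnVecE_sq,
    sum_sub_distrib, ← mul_sum, sum_const, card_univ, Fintype.card_fin, nsmul_eq_mul]
  ring

lemma sum_costEData {d k n : ℕ} {ι : Type*} [Fintype ι] (C : ι → Fin k → EuclideanSpace ℝ (Fin d))
    (D : Fin n → EuclideanSpace ℝ (Fin d)) :
    ∑ i, costEData (C i) D = (∑ t, ∑ i, costE (C i) (D t)) / n := by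
  simp only [costEData, ← sum_div]
  rw [sum_comm]

lemma sum_costEData_axisPair {d n : ℕ} (hn : 0 < n) {κ : ℝ} (hκ : 0 ≤ κ)
    (D : Fin n → EuclideanSpace ℝ (Fin d)) :
    ∑ i, costEData (axisPair (d * κ) i) D
      = d * ((∑ t, ‖D t - κ • sgnVecE (D t)‖ ^ 2) / n) + ((d : ℝ) ^ 3 - (d : ℝ) ^ 2) * κ ^ 2 := by
  simp only [sum_costEData, sum_costE_axisPair hκ, sum_add_distrib, ← mul_sum, sum_const,
    card_univ, Fintype.card_fin, nsmul_eq_mul]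
  field_simp

theorem stmt_9_general (d n m : ℕ) (hd : 0 < d) (hn : 0 < n) (hm : 0 < m)
    (κ ξ : ℝ) (hκ : 0 < κ)
    (D' : Fin n → EuclideanSpace ℝ (Fin d)) (hD' : ∀ t l, D' t l = κ ∨ D' t l = -κ)
    (Dtil : Fin m → EuclideanSpace ℝ (Fin d))
    (hacc : ∀ i : Fin d,
      |costEData ![(d * κ) • EuclideanSpace.single i (1 : ℝ),
                   (-(d * κ)) • EuclideanSpace.single i (1 : ℝ)] Dtil -
        costEData ![(d * κ) • EuclideanSpace.single i (1 : ℝ),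
                    (-(d * κ)) • EuclideanSpace.single i (1 : ℝ)] D'| ≤ ξ) :
    (∑ t, ‖Dtil t - κ • sgnVecE (Dtil t)‖ ^ 2) / m ≤ ξ := by
  have hsum : ∑ i, (costEData (axisPair (d * κ) i) Dtil - costEData (axisPair (d * κ) i) D')
      ≤ ∑ _i : Fin d, ξ :=
    sum_le_sum fun i _ => (le_abs_self _).trans (hacc i)
  rw [sum_sub_distrib, sum_costEData_axisPair hm hκ.le, sum_costEData_axisPair hn hκ.le] at hsum
  simp only [smul_sgnVecE_eq_self hκ (hD' _), sub_self, norm_zero, sum_const, card_univ,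
    Fintype.card_fin, nsmul_eq_mul] at hsum
  exact le_of_mul_le_mul_left (by simpa using hsum) (Nat.cast_pos.2 hd)

theorem stmt_9 (d n m : ℕ) (hd : 0 < d) (hn : 0 < n) (hm : 0 < m)
    (κ ξ : ℝ) (hκ : 0 < κ) (hξ : 0 ≤ ξ)
    (D' : Fin n → EuclideanSpace ℝ (Fin d)) (hD' : ∀ t l, D' t l = κ ∨ D' t l = -κ)
    (Dtil : Fin m → EuclideanSpace ℝ (Fin d))
    (hacc : ∀ i : Fin d,
      |costEData ![(d * κ) • EuclideanSpace.single i (1 : ℝ),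
                   (-(d * κ)) • EuclideanSpace.single i (1 : ℝ)] Dtil -
        costEData ![(d * κ) • EuclideanSpace.single i (1 : ℝ),
                    (-(d * κ)) • EuclideanSpace.single i (1 : ℝ)] D'| ≤ ξ) :
    (∑ t, ‖Dtil t - κ • sgnVecE (Dtil t)‖ ^ 2) / m ≤ ξ :=
  stmt_9_general d n m hd hn hm κ ξ hκ D' hD' Dtil hacc
end

section
/- Let d be a positive integer, κ > 0, i = (i₁, i₂, i₃) ∈ [d]³, and s = (s₁, s₂, s₃) ∈ {−1, 1}³. Let x̃' ∈ ℝ^d be arbitrary and let x̃ = sgn(x̃') ∈ {−1, 1}^d be its coordinatewise sign (with sgn(0) = 1). Let C^0 = {0} and C^ψ = {c^{ψ,1}, c^{ψ,2}, c^{ψ,3}} with c^{ψ,j} = 2κ·s_j·𝟏_{i_j}. Then cost_{C^ψ,2}(x̃') − cost_{C^0,2}(x̃') ≥ 4κ²·(1 − ψ_{i,s}(x̃)) − 4κ·‖x̃' − κ·sgn(x̃')‖₂. -/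
/-- The 3-literal disjunction query `ψ_{i,s}`. -/
noncomputable def psi {d : ℕ} (idx : Fin 3 → Fin d) (s : Fin 3 → ℝ) (x : Fin d → ℝ) : ℝ :=
  1 - (1 / 4) * ((1 - s 0 * x (idx 0)) * (1 - s 1 * x (idx 1)) * (1 - s 2 * x (idx 2)))

open EuclideanSpace

lemma abs_sgn (v : ℝ) : |sgn v| = 1 := by
  unfold sgn
  split_ifs <;> norm_num

lemma sgnVecE_apply {d : ℕ} (y : EuclideanSpace ℝ (Fin d)) (i : Fin d) :
    sgnVecE y i = sgn (y i) :=
  rfl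

lemma costE_const {d : ℕ} (c x : EuclideanSpace ℝ (Fin d)) :
    costE (fun _ : Fin 1 => c) x = ‖x - c‖ ^ 2 :=
  ciInf_const

lemma le_costE {d k : ℕ} [NeZero k] {C : Fin k → EuclideanSpace ℝ (Fin d)}
    {x : EuclideanSpace ℝ (Fin d)} {b : ℝ} (h : ∀ j, b ≤ ‖x - C j‖ ^ 2) : b ≤ costE C x :=
  le_ciInf h

lemma norm_sub_smul_single_sq {d : ℕ} (x : EuclideanSpace ℝ (Fin d)) (a : ℝ) (i : Fin d) :
    ‖x - a • single i (1 : ℝ)‖ ^ 2 = ‖x‖ ^ 2 - 2 * a * x i + a ^ 2 := by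
  rw [norm_sub_sq_real, real_inner_smul_right, inner_single_right, norm_smul, PiLp.norm_single]
  simp only [conj_trivial, one_mul, norm_one, mul_one, Real.norm_eq_abs, sq_abs]
  ring

lemma norm_sub_smul_single_sq_ge {d : ℕ} {κ t : ℝ} (hκ : 0 ≤ κ) (ht : |t| = 1)
    (x y : EuclideanSpace ℝ (Fin d)) (i : Fin d) :
    ‖x‖ ^ 2 + 4 * κ ^ 2 * (1 - t * y i) - 4 * κ * ‖x - κ • y‖ ≤
      ‖x - (2 * κ * t) • single i (1 : ℝ)‖ ^ 2 := by
  have hcoord : t * (x i - κ * y i) ≤ ‖x - κ • y‖ :=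
    calc t * (x i - κ * y i) ≤ |t * (x i - κ * y i)| := le_abs_self _
      _ = ‖(x - κ • y) i‖ := by simp [abs_mul, ht]
      _ ≤ ‖x - κ • y‖ := PiLp.norm_apply_le _ _
  have ht2 : t ^ 2 = 1 := by rw [← sq_abs, ht, one_pow]
  rw [norm_sub_smul_single_sq]
  nlinarith [mul_le_mul_of_nonneg_left hcoord hκ]

lemma mul_mul_le_four_mul {a b c : ℝ} (ha : 0 ≤ a) (hb : b ∈ Set.Icc (0 : ℝ) 2)
    (hc : c ∈ Set.Icc (0 : ℝ) 2) : a * b * c ≤ 4 * a := by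
  have hbc : b * c ≤ 2 * 2 := mul_le_mul hb.2 hc.2 hc.1 zero_le_two
  nlinarith [mul_le_mul_of_nonneg_left hbc ha]

lemma one_sub_psi_le {d : ℕ} (idx : Fin 3 → Fin d) (s : Fin 3 → ℝ) (x : Fin d → ℝ)
    (hx : ∀ j, |s j * x (idx j)| ≤ 1) (j : Fin 3) :
    1 - psi idx s x ≤ 1 - s j * x (idx j) := by
  have hmem : ∀ j, 1 - s j * x (idx j) ∈ Set.Icc (0 : ℝ) 2 := fun j => by
    constructor <;> linarith [abs_le.mp (hx j)]
  have h := fun j => (hmem j).1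
  unfold psi
  fin_cases j <;> simp only [Fin.zero_eta, Fin.mk_one, Fin.reduceFinMk]
  · linarith [mul_mul_le_four_mul (h 0) (hmem 1) (hmem 2)]
  · linarith [mul_mul_le_four_mul (h 1) (hmem 0) (hmem 2)]
  · linarith [mul_mul_le_four_mul (h 2) (hmem 0) (hmem 1)]

theorem stmt_11_general (d : ℕ) (κ : ℝ) (hκ : 0 < κ)
    (idx : Fin 3 → Fin d) (s : Fin 3 → ℝ) (hs : ∀ j, s j = 1 ∨ s j = -1)
    (x' : EuclideanSpace ℝ (Fin d)) :
    costE (fun j : Fin 3 => (2 * κ * s j) • EuclideanSpace.single (idx j) (1 : ℝ)) x' -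
        costE (fun _ : Fin 1 => (0 : EuclideanSpace ℝ (Fin d))) x' ≥
      4 * κ ^ 2 * (1 - psi idx s (sgnVecE x')) - 4 * κ * ‖x' - κ • sgnVecE x'‖ := by
  have habs : ∀ j, |s j| = 1 := fun j => (abs_eq zero_le_one).mpr (hs j)
  have hlit : ∀ j, |s j * sgnVecE x' (idx j)| ≤ 1 := fun j => by
    rw [abs_mul, habs, sgnVecE_apply, abs_sgn, one_mul]
  rw [costE_const, sub_zero, ge_iff_le, le_sub_iff_add_le]
  refine le_costE fun j => ?_
  have hcenter := norm_sub_smul_single_sq_ge hκ.le (habs j) x' (sgnVecE x') (idx j)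
  have hpsi := mul_le_mul_of_nonneg_left (one_sub_psi_le idx s _ hlit j)
    (by positivity : (0 : ℝ) ≤ 4 * κ ^ 2)
  linarith

theorem stmt_11 (d : ℕ) (hd : 0 < d) (κ : ℝ) (hκ : 0 < κ)
    (idx : Fin 3 → Fin d) (s : Fin 3 → ℝ) (hs : ∀ j, s j = 1 ∨ s j = -1)
    (x' : EuclideanSpace ℝ (Fin d)) :
    costE (fun j : Fin 3 => (2 * κ * s j) • EuclideanSpace.single (idx j) (1 : ℝ)) x' -
        costE (fun _ : Fin 1 => (0 : EuclideanSpace ℝ (Fin d))) x' ≥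
      4 * κ ^ 2 * (1 - psi idx s (sgnVecE x')) - 4 * κ * ‖x' - κ • sgnVecE x'‖ :=
  stmt_11_general d κ hκ idx s hs x'
end
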